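/- (Truncated Neumann series approximation of the inverted empirical operators.) Let Ω be a Polish space, c ∈ L^∞(Ω×Ω) a bounded Borel-measurable cost, and P, Q Borel probability measures on Ω, with samples of sizes n and m. Set δ(c) := 1 − exp(−3‖c‖_∞) ∈ (0,1). Then, deterministically, for all n, m, N ∈ ℕ and all κ ∈ ℝ: sup over f ∈ L²_0(P_n) with ‖f‖_{L²(P_n)} ≤ 1 of ‖ Σ_{k=0}^N (A_{Q_m}A_{P_n})^k (f + κ·1) − (I_{L²(P_n)} − A_{Q_m}Ā_{P_n})⁻¹ (f + κ·1) ‖_{L²(P_n)} ≤ δ(c)^{N+1}/(1 − δ(c)) + N·|κ|, and sup over g ∈ L²_0(Q_m) with ‖g‖_{L²(Q_m)} ≤ 1 of ‖ Σ_{k=0}^N (A_{P_n}A_{Q_m})^k (g + κ·1) − (I_{L²_0(Q_m)} − Ā_{P_n}A_{Q_m})⁻¹ (g) ‖_{L²(Q_m)} ≤ δ(c)^{N+1}/(1 − δ(c)) + (N+1)·|κ|. -/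

import Mathlib

open MeasureTheory ProbabilityTheory Filter
open scoped ENNReal NNReal Topology

noncomputable section

namespace EOT

variable {Ω : Type*} [MeasurableSpace Ω]

/-- Empirical measure of the first `n` samples `X 0, …, X (n-1)` at outcome `θ`. -/
def empMeas {Θ : Type*} (X : ℕ → Θ → Ω) (n : ℕ) (θ : Θ) : Measure Ω :=
  (n : ℝ≥0∞)⁻¹ • ∑ i ∈ Finset.range n, Measure.dirac (X i θ)

/-- The Schrödinger system characterizing the dual entropic optimal transport potentials
(regularization parameter 1) for the cost `c` between `P` and `Q`. -/
def SchrodingerSystem (c : Ω × Ω → ℝ) (P Q : Measure Ω) (f g : Ω → ℝ) : Prop :=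
  (∀ x, f x = - Real.log (∫ y, Real.exp (g y - c (x, y)) ∂Q)) ∧
  (∀ y, g y = - Real.log (∫ x, Real.exp (f x - c (x, y)) ∂P))

/-- Density of the entropic optimal transport plan w.r.t. `P ⊗ Q`, built from dual
potentials `f`, `g`: `ξ(x,y) = exp (f x + g y - c (x,y))`. -/
def eotDensity (c : Ω × Ω → ℝ) (f g : Ω → ℝ) : Ω × Ω → ℝ :=
  fun p => Real.exp (f p.1 + g p.2 - c p)

/-- Kernel operator `A_P`: `(A_P f)(y) = ∫ ξ(x,y) f(x) dP(x)`. -/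
def opAP (P : Measure Ω) (ξ : Ω × Ω → ℝ) (f : Ω → ℝ) : Ω → ℝ :=
  fun y => ∫ x, ξ (x, y) * f x ∂P

/-- Kernel operator `A_Q`: `(A_Q g)(x) = ∫ ξ(x,y) g(y) dQ(y)`. -/
def opAQ (Q : Measure Ω) (ξ : Ω × Ω → ℝ) (g : Ω → ℝ) : Ω → ℝ :=
  fun x => ∫ y, ξ (x, y) * g y ∂Q

/-- `η_x(x) = ∫ η(x,y) ξ(x,y) dQ(y)`. -/
def etaX (Q : Measure Ω) (ξ η : Ω × Ω → ℝ) : Ω → ℝ :=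
  fun x => ∫ y, η (x, y) * ξ (x, y) ∂Q

/-- `η_y(y) = ∫ η(x,y) ξ(x,y) dP(x)`. -/
def etaY (P : Measure Ω) (ξ η : Ω × Ω → ℝ) : Ω → ℝ :=
  fun y => ∫ x, η (x, y) * ξ (x, y) ∂P

/-- Entropic optimal transport cost `S(P,Q)` (regularization parameter 1): the infimum,
over couplings `π` of `P` and `Q` which are absolutely continuous with respect to `P ⊗ Q`
with integrable log-density, of `∫ c dπ + KL(π ∥ P ⊗ Q)`. -/
def entropicCost (c : Ω × Ω → ℝ) (P Q : Measure Ω) : ℝ :=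
  sInf { r : ℝ | ∃ pi : Measure (Ω × Ω), IsProbabilityMeasure pi ∧
    pi.fst = P ∧ pi.snd = Q ∧ pi ≪ P.prod Q ∧
    Integrable (fun z => Real.log ((pi.rnDeriv (P.prod Q) z).toReal)) pi ∧
    r = ∫ z, c z ∂pi + ∫ z, Real.log ((pi.rnDeriv (P.prod Q) z).toReal) ∂pi }

/-- Convergence in distribution (weak convergence of the laws) of a sequence of
random variables with values in `E`. -/
def TendstoInDistribution {Θ E : Type*} [MeasurableSpace Θ] [MeasurableSpace E]
    [TopologicalSpace E] (Pr : Measure Θ) (W : ℕ → Θ → E) (μ : Measure E) : Prop :=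
  ∀ φ : BoundedContinuousFunction E ℝ,
    Tendsto (fun k => ∫ θ, φ (W k θ) ∂Pr) atTop (𝓝 (∫ x, φ x ∂μ))

/-- Convergence in probability to a constant. -/
def TendstoInProbability {Θ : Type*} [MeasurableSpace Θ]
    (Pr : Measure Θ) (W : ℕ → Θ → ℝ) (L : ℝ) : Prop :=
  ∀ ε : ℝ, 0 < ε → Tendsto (fun k => Pr {θ | ε < |W k θ - L|}) atTop (𝓝 (0 : ℝ≥0∞))

/-- `W = o_p(a)`: `W k / a k` tends to zero in probability. -/
def LittleOP {Θ : Type*} [MeasurableSpace Θ]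
    (Pr : Measure Θ) (W : ℕ → Θ → ℝ) (a : ℕ → ℝ) : Prop :=
  ∀ ε : ℝ, 0 < ε → Tendsto (fun k => Pr {θ | ε * a k < |W k θ|}) atTop (𝓝 (0 : ℝ≥0∞))

/-- `W = O_p(a)`: `W k / a k` is stochastically bounded. -/
def BigOP {Θ : Type*} [MeasurableSpace Θ]
    (Pr : Measure Θ) (W : ℕ → Θ → ℝ) (a : ℕ → ℝ) : Prop :=
  ∀ ε : ℝ, 0 < ε → ∃ C : ℝ, 0 < C ∧
    ∀ᶠ k in atTop, Pr {θ | C * a k < |W k θ|} < ENNReal.ofReal ε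

/-- Empirical (or population) `L²` norm of a function. -/
def l2norm (μ : Measure Ω) (h : Ω → ℝ) : ℝ := Real.sqrt (∫ x, (h x) ^ 2 ∂μ)

end EOT

/-!
The Schrödinger equations make the empirical density `ξ` bistochastic, and `‖c‖_∞ ≤ C` gives
the Doeblin floor `ξ(x, y) ≥ e^{-2C} φ(x)` for a `Pₙ`-probability density `φ ≥ e^{-2C}`.
Writing `‖A_P h‖²` as `‖h‖²` minus a mean of conditional variances, the floor shows that
`‖A_P h‖² ≤ λ ‖h‖²` for centred `h`, with `λ = 1 - e^{-2C} (e^{-2C} + 1) / 2 ≤ δ(c)`; as `A_Q` is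
the adjoint of `A_P`, the operator `A_Q A_P` contracts centred functions by `λ`. Since it fixes
constants and preserves means, both inverted equations reduce to `w - A_Q A_P w = f` for a
centred `w`, and the truncated Neumann series telescopes to `w - (A_Q A_P)^{N+1} w` plus a
constant, with `‖w‖ ≤ 1 / (1 - λ)`.
-/

open Finset
open scoped BigOperators

namespace Finset

variable {ι κ : Type*} {s : Finset ι} {t : Finset κ}

theorem sq_expect_mul_eq (w F : ι → ℝ) (hw : 𝔼 i ∈ s, w i = 1) :
    (𝔼 i ∈ s, w i * F i) ^ 2 = 𝔼 i ∈ s, w i * F i ^ 2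
      - (𝔼 i ∈ s, 𝔼 i' ∈ s, w i * w i' * (F i - F i') ^ 2) / 2 := by
  have expand : ∀ i i', w i * w i' * (F i - F i') ^ 2 =
      w i * F i ^ 2 * w i' - 2 * ((w i * F i) * (w i' * F i')) + w i * (w i' * F i' ^ 2) := by
    intros; ring
  simp only [expand, expect_add_distrib, expect_sub_distrib, ← mul_expect, ← expect_mul, hw]
  ring

theorem expect_expect_mul_sub_sq (Φ F : ι → ℝ) (hΦ : 𝔼 i ∈ s, Φ i = 1)
    (hF : 𝔼 i ∈ s, F i = 0) :
    𝔼 i ∈ s, 𝔼 i' ∈ s, Φ i * (F i - F i') ^ 2 = 𝔼 i ∈ s, Φ i * F i ^ 2 + 𝔼 i ∈ s, F i ^ 2 := by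
  have expand : ∀ i i', Φ i * (F i - F i') ^ 2 =
      Φ i * F i ^ 2 * 1 - 2 * (Φ i * F i) * F i' + Φ i * F i' ^ 2 := by
    intros; ring
  have hs : s.Nonempty := nonempty_of_ne_empty (by rintro rfl; simp at hΦ)
  simp only [expand, expect_add_distrib, expect_sub_distrib, ← mul_expect, ← expect_mul, hΦ, hF,
    expect_const hs]
  ring

/-- Doeblin's bound: the left side is `𝔼 F²` minus a mean of conditional variances, and the floor
`Ξ ≥ η Φ` bounds that Dirichlet form from below. -/
theorem expect_sq_expect_mul_le (Ξ : ι → κ → ℝ) (F Φ : ι → ℝ) {η ε : ℝ} (hη : 0 ≤ η)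
    (hΞ : ∀ i ∈ s, ∀ j ∈ t, 0 ≤ Ξ i j)
    (hrow : ∀ j ∈ t, 𝔼 i ∈ s, Ξ i j = 1) (hcol : ∀ i ∈ s, 𝔼 j ∈ t, Ξ i j = 1)
    (hfloor : ∀ i ∈ s, ∀ j ∈ t, η * Φ i ≤ Ξ i j) (hΦε : ∀ i ∈ s, ε ≤ Φ i)
    (hΦ : 𝔼 i ∈ s, Φ i = 1) (hF : 𝔼 i ∈ s, F i = 0) :
    𝔼 j ∈ t, (𝔼 i ∈ s, Ξ i j * F i) ^ 2 ≤ (1 - η * (ε + 1) / 2) * 𝔼 i ∈ s, F i ^ 2 := by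
  have variance : 𝔼 j ∈ t, (𝔼 i ∈ s, Ξ i j * F i) ^ 2 = 𝔼 i ∈ s, F i ^ 2
      - (𝔼 i ∈ s, 𝔼 i' ∈ s, 𝔼 j ∈ t, Ξ i j * Ξ i' j * (F i - F i') ^ 2) / 2 := by
    have marginal : 𝔼 j ∈ t, 𝔼 i ∈ s, Ξ i j * F i ^ 2 = 𝔼 i ∈ s, F i ^ 2 := by
      rw [expect_comm]
      exact expect_congr rfl fun i hi => by rw [← expect_mul, hcol i hi, one_mul]
    rw [expect_congr rfl fun j hj => sq_expect_mul_eq (fun i => Ξ i j) F (hrow j hj),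
      expect_sub_distrib, marginal, ← expect_div, expect_comm]
    simp only [expect_comm t s]
  have dirichlet : η * 𝔼 i ∈ s, 𝔼 i' ∈ s, Φ i * (F i - F i') ^ 2 ≤
      𝔼 i ∈ s, 𝔼 i' ∈ s, 𝔼 j ∈ t, Ξ i j * Ξ i' j * (F i - F i') ^ 2 := by
    simp only [mul_expect]
    refine expect_le_expect fun i hi => expect_le_expect fun i' hi' => ?_
    calc η * (Φ i * (F i - F i') ^ 2) = 𝔼 j ∈ t, η * Φ i * Ξ i' j * (F i - F i') ^ 2 := by
          rw [← expect_mul, ← mul_expect, hcol i' hi']; ring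
      _ ≤ _ := expect_le_expect fun j hj => by
          gcongr
          · exact hΞ i' hi' j hj
          · exact hfloor i hi j hj
  have weighted : ε * 𝔼 i ∈ s, F i ^ 2 ≤ 𝔼 i ∈ s, Φ i * F i ^ 2 := by
    rw [mul_expect]
    exact expect_le_expect fun i hi => mul_le_mul_of_nonneg_right (hΦε i hi) (sq_nonneg _)
  rw [expect_expect_mul_sub_sq Φ F hΦ hF] at dirichlet
  nlinarith

theorem expect_exp_le_exp_mul {u v : ι → ℝ} {C : ℝ} (h : ∀ i ∈ s, u i ≤ v i + C) :
    𝔼 i ∈ s, Real.exp (u i) ≤ Real.exp C * 𝔼 i ∈ s, Real.exp (v i) := by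
  rw [mul_expect]
  exact expect_le_expect fun i hi => by
    rw [← Real.exp_add]
    exact Real.exp_le_exp.2 (by linarith [h i hi])

end Finset

namespace EOT

variable {ι κ α β : Type*} {s : Finset ι} {t : Finset κ} {x : ι → α} {y : κ → β}

variable (s x) in
/-- The norm of `L²(Pₙ)`, where `Pₙ` is the empirical measure of the points `x i`, `i ∈ s`. -/
def empNorm (h : α → ℝ) : ℝ := √(𝔼 i ∈ s, h (x i) ^ 2)

theorem empNorm_nonneg (h : α → ℝ) : 0 ≤ empNorm s x h := Real.sqrt_nonneg _

theorem sq_empNorm (h : α → ℝ) : empNorm s x h ^ 2 = 𝔼 i ∈ s, h (x i) ^ 2 :=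
  Real.sq_sqrt (expect_nonneg fun _ _ => sq_nonneg _)

theorem expect_mul_le_empNorm_mul (u v : α → ℝ) :
    𝔼 i ∈ s, u (x i) * v (x i) ≤ empNorm s x u * empNorm s x v := by
  rw [empNorm, empNorm, ← Real.sqrt_mul (expect_nonneg fun _ _ => sq_nonneg _)]
  exact Real.le_sqrt_of_sq_le (expect_mul_sq_le_sq_mul_sq s _ _)

theorem empNorm_add_le (u v : α → ℝ) : empNorm s x (u + v) ≤ empNorm s x u + empNorm s x v := by
  have cross := expect_mul_le_empNorm_mul (s := s) (x := x) u v
  refine Real.sqrt_le_iff.2 ⟨add_nonneg (empNorm_nonneg u) (empNorm_nonneg v), ?_⟩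
  have expand : 𝔼 i ∈ s, (u + v) (x i) ^ 2 = empNorm s x u ^ 2
      + 2 * 𝔼 i ∈ s, u (x i) * v (x i) + empNorm s x v ^ 2 := by
    simp only [sq_empNorm, mul_expect, ← expect_add_distrib, Pi.add_apply]
    exact expect_congr rfl fun _ _ => by ring
  rw [expand]
  nlinarith

theorem empNorm_neg (h : α → ℝ) : empNorm s x (-h) = empNorm s x h := by
  simp [empNorm]

theorem empNorm_const (hs : s.Nonempty) (r : ℝ) : empNorm s x (fun _ => r) = |r| := by
  rw [empNorm, expect_const hs, Real.sqrt_sq_eq_abs]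

variable (s x) in
/-- The operator `A_{Pₙ}` of the kernel `k`; `kernelOp t y (flip k)` is `A_{Qₘ}`. -/
def kernelOp (k : α → β → ℝ) : (α → ℝ) →ₗ[ℝ] β → ℝ where
  toFun h b := 𝔼 i ∈ s, k (x i) b * h (x i)
  map_add' u v := by
    ext b
    simp only [Pi.add_apply, mul_add, expect_add_distrib]
  map_smul' r u := by
    ext b
    simp only [Pi.smul_apply, smul_eq_mul, RingHom.id_apply, mul_expect]
    exact expect_congr rfl fun _ _ => by ring

@[simp]
theorem kernelOp_apply (k : α → β → ℝ) (h : α → ℝ) (b : β) :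
    kernelOp s x k h b = 𝔼 i ∈ s, k (x i) b * h (x i) := rfl

theorem kernelOp_const {k : α → β → ℝ} (hk : ∀ b, 𝔼 i ∈ s, k (x i) b = 1) (r : ℝ) :
    kernelOp s x k (fun _ => r) = fun _ => r := by
  ext b
  rw [kernelOp_apply, ← expect_mul, hk, one_mul]

theorem expect_mul_kernelOp (k : α → β → ℝ) (w : β → ℝ) (h : α → ℝ) :
    𝔼 j ∈ t, w (y j) * kernelOp s x k h (y j) =
      𝔼 i ∈ s, kernelOp t y (flip k) w (x i) * h (x i) := by
  simp only [kernelOp_apply, mul_expect, expect_mul, flip]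
  rw [expect_comm]
  exact expect_congr rfl fun _ _ => expect_congr rfl fun _ _ => by ring

theorem expect_kernelOp {k : α → β → ℝ} (hk : ∀ a, 𝔼 j ∈ t, k a (y j) = 1) (h : α → ℝ) :
    𝔼 j ∈ t, kernelOp s x k h (y j) = 𝔼 i ∈ s, h (x i) := by
  calc 𝔼 j ∈ t, kernelOp s x k h (y j) = 𝔼 j ∈ t, 1 * kernelOp s x k h (y j) := by
        simp only [one_mul]
    _ = 𝔼 i ∈ s, kernelOp t y (flip k) (fun _ => 1) (x i) * h (x i) :=
        expect_mul_kernelOp k (fun _ => 1) h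
    _ = 𝔼 i ∈ s, h (x i) := by
        rw [kernelOp_const (k := flip k) hk]
        simp only [one_mul]

variable (s t x y) in
structure IsBistochasticContraction (k : α → β → ℝ) (lam : ℝ) : Prop where
  expect_fst : ∀ b, 𝔼 i ∈ s, k (x i) b = 1
  expect_snd : ∀ a, 𝔼 j ∈ t, k a (y j) = 1
  expect_sq_le : ∀ h : α → ℝ, 𝔼 i ∈ s, h (x i) = 0 →
    𝔼 j ∈ t, kernelOp s x k h (y j) ^ 2 ≤ lam * 𝔼 i ∈ s, h (x i) ^ 2

theorem isBistochasticContraction_of_floor {k : α → β → ℝ} {η ε : ℝ} (φ : α → ℝ)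
    (hη : 0 ≤ η) (hε : 0 ≤ ε)
    (hfst : ∀ b, 𝔼 i ∈ s, k (x i) b = 1) (hsnd : ∀ a, 𝔼 j ∈ t, k a (y j) = 1)
    (hfloor : ∀ a b, η * φ a ≤ k a b) (hφε : ∀ a, ε ≤ φ a) (hφ : 𝔼 i ∈ s, φ (x i) = 1) :
    IsBistochasticContraction s t x y k (1 - η * (ε + 1) / 2) where
  expect_fst := hfst
  expect_snd := hsnd
  expect_sq_le h hh :=
    expect_sq_expect_mul_le (fun i j => k (x i) (y j)) (h ∘ x) (φ ∘ x) hη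
      (fun _ _ _ _ => (mul_nonneg hη (hε.trans (hφε _))).trans (hfloor _ _))
      (fun _ _ => hfst _) (fun _ _ => hsnd _) (fun _ _ _ _ => hfloor _ _) (fun _ _ => hφε _)
      hφ hh

variable (s t x y) in
/-- The operator `A_{Qₘ} A_{Pₙ}`. -/
def roundTrip (k : α → β → ℝ) : Module.End ℝ (α → ℝ) :=
  kernelOp t y (flip k) ∘ₗ kernelOp s x k

namespace IsBistochasticContraction

variable {k : α → β → ℝ} {lam : ℝ}

theorem roundTrip_const (hk : IsBistochasticContraction s t x y k lam) (r : ℝ) :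
    roundTrip s t x y k (fun _ => r) = fun _ => r := by
  rw [roundTrip, LinearMap.comp_apply, kernelOp_const hk.expect_fst,
    kernelOp_const (k := flip k) hk.expect_snd]

theorem expect_roundTrip (hk : IsBistochasticContraction s t x y k lam) (h : α → ℝ) :
    𝔼 i ∈ s, roundTrip s t x y k h (x i) = 𝔼 i ∈ s, h (x i) := by
  rw [roundTrip, LinearMap.comp_apply, expect_kernelOp (k := flip k) hk.expect_fst,
    expect_kernelOp hk.expect_snd]

theorem empNorm_kernelOp_le (hk : IsBistochasticContraction s t x y k lam) (hlam : 0 ≤ lam)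
    {h : α → ℝ} (hh : 𝔼 i ∈ s, h (x i) = 0) :
    empNorm t y (kernelOp s x k h) ≤ √lam * empNorm s x h := by
  rw [empNorm, empNorm, ← Real.sqrt_mul hlam]
  exact Real.sqrt_le_sqrt (hk.expect_sq_le h hh)

/-- `A_Q` is the adjoint of `A_P`, so `‖A_Q A_P h‖² = ⟪A_P h, A_P A_Q A_P h⟫` and both factors
gain `√lam`. -/
theorem empNorm_roundTrip_le (hk : IsBistochasticContraction s t x y k lam) (hlam : 0 ≤ lam)
    {h : α → ℝ} (hh : 𝔼 i ∈ s, h (x i) = 0) :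
    empNorm s x (roundTrip s t x y k h) ≤ lam * empNorm s x h := by
  set Th := roundTrip s t x y k h
  have hTh : 𝔼 i ∈ s, Th (x i) = 0 := by rw [hk.expect_roundTrip, hh]
  have key : empNorm s x Th ^ 2 ≤ lam * empNorm s x h * empNorm s x Th := by
    calc empNorm s x Th ^ 2 = 𝔼 j ∈ t, kernelOp s x k h (y j) * kernelOp s x k Th (y j) := by
          rw [sq_empNorm, expect_mul_kernelOp]
          exact expect_congr rfl fun _ _ => by rw [sq]; rfl
      _ ≤ empNorm t y (kernelOp s x k h) * empNorm t y (kernelOp s x k Th) :=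
          expect_mul_le_empNorm_mul _ _
      _ ≤ (√lam * empNorm s x h) * (√lam * empNorm s x Th) := by
          refine mul_le_mul (hk.empNorm_kernelOp_le hlam hh) (hk.empNorm_kernelOp_le hlam hTh)
            (empNorm_nonneg _) (mul_nonneg (Real.sqrt_nonneg _) (empNorm_nonneg _))
      _ = lam * empNorm s x h * empNorm s x Th := by
          rw [mul_mul_mul_comm, Real.mul_self_sqrt hlam, mul_assoc]
  rcases (empNorm_nonneg Th).eq_or_lt with h0 | hpos
  · rw [← h0]
    exact mul_nonneg hlam (empNorm_nonneg h)
  · nlinarith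

end IsBistochasticContraction

section Neumann

variable {T : Module.End ℝ (α → ℝ)} {lam : ℝ}

theorem expect_pow_apply (hmean : ∀ u, 𝔼 i ∈ s, T u (x i) = 𝔼 i ∈ s, u (x i)) (u : α → ℝ)
    (j : ℕ) : 𝔼 i ∈ s, (T ^ j) u (x i) = 𝔼 i ∈ s, u (x i) := by
  induction j with
  | zero => rfl
  | succ j ih => rw [pow_succ', Module.End.mul_apply, hmean, ih]

theorem empNorm_pow_apply_le (hmean : ∀ u, 𝔼 i ∈ s, T u (x i) = 𝔼 i ∈ s, u (x i))
    (hT : ∀ u, 𝔼 i ∈ s, u (x i) = 0 → empNorm s x (T u) ≤ lam * empNorm s x u) (hlam : 0 ≤ lam)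
    {u : α → ℝ} (hu : 𝔼 i ∈ s, u (x i) = 0) (j : ℕ) :
    empNorm s x ((T ^ j) u) ≤ lam ^ j * empNorm s x u := by
  induction j with
  | zero => simp
  | succ j ih =>
    rw [pow_succ', Module.End.mul_apply, pow_succ', mul_assoc]
    exact (hT _ ((expect_pow_apply hmean u j).trans hu)).trans
      (mul_le_mul_of_nonneg_left ih hlam)

theorem sum_pow_apply_sub_apply (T : Module.End ℝ (α → ℝ)) (w : α → ℝ) (n : ℕ) :
    ∑ j ∈ range n, (T ^ j) (w - T w) = w - (T ^ n) w := by
  simpa [Module.End.mul_apply, LinearMap.sum_apply] using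
    LinearMap.congr_fun (geom_sum_mul_neg T n) w

theorem pow_apply_const (hconst : ∀ r, T (fun _ => r) = fun _ => r) (r : ℝ) (j : ℕ) :
    (T ^ j) (fun _ => r) = fun _ => r := by
  rw [Module.End.pow_apply]
  exact Function.iterate_fixed (hconst r) j

/-- The series telescopes to `w - T^{N+1} w`, up to the constant `(N + 1) κ`. -/
theorem empNorm_sum_pow_apply_sub_le (hs : s.Nonempty)
    (hconst : ∀ r, T (fun _ => r) = fun _ => r)
    (hmean : ∀ u, 𝔼 i ∈ s, T u (x i) = 𝔼 i ∈ s, u (x i))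
    (hT : ∀ u, 𝔼 i ∈ s, u (x i) = 0 → empNorm s x (T u) ≤ lam * empNorm s x u)
    (hlam₀ : 0 ≤ lam) (hlam₁ : lam < 1) {f w : α → ℝ} (hw : 𝔼 i ∈ s, w (x i) = 0)
    (hwf : w - T w = f) (hf : empNorm s x f ≤ 1) (N : ℕ) (κ r : ℝ) :
    empNorm s x ((∑ j ∈ range (N + 1), (T ^ j) (f + fun _ => κ)) - (w + fun _ => r))
      ≤ lam ^ (N + 1) / (1 - lam) + |(N + 1) * κ - r| := by
  have hsum : (∑ j ∈ range (N + 1), (T ^ j) (f + fun _ => κ)) - (w + fun _ => r)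
      = -(T ^ (N + 1)) w + fun _ => (N + 1) * κ - r := by
    simp only [map_add, sum_add_distrib, pow_apply_const hconst, ← hwf,
      sum_pow_apply_sub_apply]
    ext a
    simp only [Pi.add_apply, Pi.sub_apply, Pi.neg_apply, sum_const, card_range, nsmul_eq_mul,
      Pi.mul_apply, Pi.natCast_apply]
    push_cast
    ring
  have hwnorm : empNorm s x w ≤ 1 / (1 - lam) := by
    have : empNorm s x w ≤ 1 + lam * empNorm s x w := by
      calc empNorm s x w = empNorm s x (f + T w) := by rw [← hwf, sub_add_cancel]
        _ ≤ empNorm s x f + empNorm s x (T w) := empNorm_add_le _ _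
        _ ≤ 1 + lam * empNorm s x w := add_le_add hf (hT w hw)
    rw [le_div_iff₀ (by linarith)]
    linarith
  rw [hsum]
  calc _ ≤ empNorm s x (-(T ^ (N + 1)) w) + empNorm s x (fun _ => (N + 1) * κ - r) :=
        empNorm_add_le _ _
    _ ≤ lam ^ (N + 1) * (1 / (1 - lam)) + |(N + 1) * κ - r| := by
        rw [empNorm_neg, empNorm_const hs]
        gcongr
        exact (empNorm_pow_apply_le hmean hT hlam₀ hw _).trans
          (mul_le_mul_of_nonneg_left hwnorm (pow_nonneg hlam₀ _))
    _ = lam ^ (N + 1) / (1 - lam) + |(N + 1) * κ - r| := by rw [mul_one_div]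

end Neumann

theorem sum_iterate_apply_sub (T : Module.End ℝ (α → ℝ)) (g u : α → ℝ) (n : ℕ) :
    (fun a => (∑ j ∈ range n, T^[j] g a) - u a) = (∑ j ∈ range n, (T ^ j) g) - u := by
  ext a
  simp [Finset.sum_apply, Module.End.pow_apply]

namespace IsBistochasticContraction

variable {k : α → β → ℝ} {lam : ℝ}

theorem empNorm_sum_roundTrip_sub_le (hk : IsBistochasticContraction s t x y k lam)
    (hs : s.Nonempty) (hlam₀ : 0 ≤ lam) (hlam₁ : lam < 1) {f w : α → ℝ}
    (hw : 𝔼 i ∈ s, w (x i) = 0) (hwf : w - roundTrip s t x y k w = f) (hf : empNorm s x f ≤ 1)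
    (N : ℕ) (κ r : ℝ) :
    empNorm s x ((∑ j ∈ range (N + 1), (roundTrip s t x y k ^ j) (f + fun _ => κ))
      - (w + fun _ => r)) ≤ lam ^ (N + 1) / (1 - lam) + |(N + 1) * κ - r| :=
  empNorm_sum_pow_apply_sub_le hs hk.roundTrip_const hk.expect_roundTrip
    (fun _ hu => hk.empNorm_roundTrip_le hlam₀ hu) hlam₀ hlam₁ hw hwf hf N κ r

/-- The equation `u - A_Q Ā_P u = f + κ` forces `u` to have mean `κ`, and
`u - κ` is then the centred solution of `w - A_Q A_P w = f`. -/
theorem empNorm_neumann_sub_le_fst (hk : IsBistochasticContraction s t x y k lam)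
    (hs : s.Nonempty) (hlam₀ : 0 ≤ lam) (hlam₁ : lam < 1) {f u : α → ℝ}
    (hf₀ : 𝔼 i ∈ s, f (x i) = 0) (hf₁ : empNorm s x f ≤ 1) {κ : ℝ}
    (hu : ∀ a, u a - kernelOp t y (flip k)
      (fun b => kernelOp s x k u b - 𝔼 j ∈ t, kernelOp s x k u (y j)) a = f a + κ) (N : ℕ) :
    empNorm s x (fun a => (∑ j ∈ range (N + 1), (roundTrip s t x y k)^[j] (fun a' => f a' + κ) a)
      - u a) ≤ lam ^ (N + 1) / (1 - lam) + N * |κ| := by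
  have hu' : ∀ a, u a - roundTrip s t x y k u a = f a + (κ - 𝔼 i ∈ s, u (x i)) := by
    intro a
    have h := hu a
    rw [expect_kernelOp hk.expect_snd, show (fun b => kernelOp s x k u b - 𝔼 i ∈ s, u (x i))
      = kernelOp s x k u - fun _ => 𝔼 i ∈ s, u (x i) from rfl, map_sub,
      kernelOp_const (k := flip k) hk.expect_snd, Pi.sub_apply] at h
    have hT : roundTrip s t x y k u a = kernelOp t y (flip k) (kernelOp s x k u) a := rfl
    linarith
  have hmean : 𝔼 i ∈ s, u (x i) = κ := by
    have h := expect_congr (s := s) rfl fun i _ => hu' (x i)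
    rw [expect_sub_distrib, expect_add_distrib, hk.expect_roundTrip, hf₀, expect_const hs] at h
    linarith
  obtain ⟨w, hw_def⟩ : ∃ w : α → ℝ, w = u - fun _ => κ := ⟨_, rfl⟩
  have hw : 𝔼 i ∈ s, w (x i) = 0 := by
    simp only [hw_def, Pi.sub_apply, expect_sub_distrib, hmean, expect_const hs, sub_self]
  have hwf : w - roundTrip s t x y k w = f := by
    ext a
    rw [hw_def, map_sub, hk.roundTrip_const]
    simp only [Pi.sub_apply]
    linarith [hu' a]
  rw [sum_iterate_apply_sub]
  calc _ = empNorm s x ((∑ j ∈ range (N + 1), (roundTrip s t x y k ^ j) (f + fun _ => κ))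
        - (w + fun _ => κ)) := by rw [hw_def, sub_add_cancel]; rfl
    _ ≤ lam ^ (N + 1) / (1 - lam) + |(N + 1) * κ - κ| :=
        hk.empNorm_sum_roundTrip_sub_le hs hlam₀ hlam₁ hw hwf hf₁ N κ κ
    _ = lam ^ (N + 1) / (1 - lam) + N * |κ| := by
        rw [show ((N : ℝ) + 1) * κ - κ = N * κ by ring, abs_mul, Nat.abs_cast]

/-- The equation `v - Ā_P A_Q v = g` forces `v` to be centred. -/
theorem empNorm_neumann_sub_le_snd (hk : IsBistochasticContraction s t x y k lam)
    (hs : s.Nonempty) (hlam₀ : 0 ≤ lam) (hlam₁ : lam < 1) {g v : α → ℝ}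
    (hg₀ : 𝔼 i ∈ s, g (x i) = 0) (hg₁ : empNorm s x g ≤ 1)
    (hv : ∀ a, v a - (roundTrip s t x y k v a - 𝔼 i ∈ s, roundTrip s t x y k v (x i)) = g a)
    (κ : ℝ) (N : ℕ) :
    empNorm s x (fun a => (∑ j ∈ range (N + 1), (roundTrip s t x y k)^[j] (fun a' => g a' + κ) a)
      - v a) ≤ lam ^ (N + 1) / (1 - lam) + (N + 1) * |κ| := by
  have hmean : 𝔼 i ∈ s, v (x i) = 0 := by
    have h := expect_congr (s := s) rfl fun i _ => hv (x i)
    rw [expect_sub_distrib, expect_sub_distrib, expect_const hs, hk.expect_roundTrip, hg₀] at h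
    linarith
  have hvg : v - roundTrip s t x y k v = g := by
    ext a
    have h := hv a
    rw [hk.expect_roundTrip, hmean] at h
    simp only [Pi.sub_apply]
    linarith
  rw [sum_iterate_apply_sub]
  calc _ = empNorm s x ((∑ j ∈ range (N + 1), (roundTrip s t x y k ^ j) (g + fun _ => κ))
        - (v + fun _ => 0)) := by rw [show (v + fun _ => (0 : ℝ)) = v from add_zero v]; rfl
    _ ≤ lam ^ (N + 1) / (1 - lam) + |(N + 1) * κ - 0| :=
        hk.empNorm_sum_roundTrip_sub_le hs hlam₀ hlam₁ hmean hvg hg₁ N κ 0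
    _ = lam ^ (N + 1) / (1 - lam) + (N + 1) * |κ| := by
        rw [sub_zero, abs_mul, abs_of_nonneg (by positivity)]

end IsBistochasticContraction

/-- The contraction factor `1 - η (η + 1) / 2` of Doeblin's bound for the floor `η = e^{-2M}`. -/
def doeblinRate (M : ℝ) : ℝ := 1 - Real.exp (-(2 * M)) * (Real.exp (-(2 * M)) + 1) / 2

theorem doeblinRate_nonneg {M : ℝ} (hM : 0 ≤ M) : 0 ≤ doeblinRate M := by
  have h : Real.exp (-(2 * M)) ≤ 1 := Real.exp_le_one_iff.2 (by linarith)
  have := Real.exp_pos (-(2 * M))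
  rw [doeblinRate]
  nlinarith

theorem doeblinRate_lt_one (M : ℝ) : doeblinRate M < 1 := by
  have := Real.exp_pos (-(2 * M))
  rw [doeblinRate]
  nlinarith

/-- With `a = e^{-M}` this is `a³ ≤ (a⁴ + a²) / 2`, i.e. `a² (a - 1)² ≥ 0`. -/
theorem doeblinRate_le (M : ℝ) : doeblinRate M ≤ 1 - Real.exp (-(3 * M)) := by
  have h2 : Real.exp (-(2 * M)) = Real.exp (-M) ^ 2 := by rw [← Real.exp_nat_mul]; ring_nf
  have h3 : Real.exp (-(3 * M)) = Real.exp (-M) ^ 3 := by rw [← Real.exp_nat_mul]; ring_nf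
  rw [doeblinRate, h2, h3]
  nlinarith [mul_nonneg (sq_nonneg (Real.exp (-M))) (sq_nonneg (Real.exp (-M) - 1))]

theorem neumann_tail_le {M : ℝ} (hM : 0 ≤ M) (N : ℕ) :
    doeblinRate M ^ (N + 1) / (1 - doeblinRate M)
      ≤ (1 - Real.exp (-(3 * M))) ^ (N + 1) / (1 - (1 - Real.exp (-(3 * M)))) :=
  div_le_div₀ (pow_nonneg ((doeblinRate_nonneg hM).trans (doeblinRate_le M)) _)
    (pow_le_pow_left₀ (doeblinRate_nonneg hM) (doeblinRate_le M) _) (by simp [Real.exp_pos])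
    (by linarith [doeblinRate_le M])

/-- Solutions of the empirical Schrödinger system for a cost bounded by `M` give a Doeblin
kernel: the floor is `e^{-2M} φ` with `φ ∝ e^f`, and `φ ≥ e^{-2M}` because the oscillation of
`f` is at most `2M`. -/
theorem isBistochasticContraction_of_schrodinger {c : α → β → ℝ} {M : ℝ}
    (hc : ∀ a b, |c a b| ≤ M) (hs : s.Nonempty) {f : α → ℝ} {g : β → ℝ}
    (hf : ∀ a, Real.exp (-f a) = 𝔼 j ∈ t, Real.exp (g (y j) - c a (y j)))
    (hg : ∀ b, Real.exp (-g b) = 𝔼 i ∈ s, Real.exp (f (x i) - c (x i) b)) :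
    IsBistochasticContraction s t x y (fun a b => Real.exp (f a + g b - c a b))
      (doeblinRate M) := by
  have hc' : ∀ a b, -M ≤ c a b ∧ c a b ≤ M := fun a b => abs_le.1 (hc a b)
  set Z := 𝔼 i ∈ s, Real.exp (f (x i))
  have hZ : 0 < Z := expect_pos (fun _ _ => Real.exp_pos _) hs
  have hosc : ∀ a a', f a' ≤ f a + 2 * M := by
    intro a a'
    have h : Real.exp (-f a) ≤ Real.exp (2 * M) * Real.exp (-f a') := by
      rw [hf, hf]
      exact expect_exp_le_exp_mul fun j _ => by linarith [hc' a (y j), hc' a' (y j)]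
    rw [← Real.exp_add, Real.exp_le_exp] at h
    linarith
  have hgZ : ∀ b, Real.exp (-g b) ≤ Real.exp M * Z := fun b => by
    rw [hg]
    exact expect_exp_le_exp_mul fun i _ => by linarith [hc' (x i) b]
  refine isBistochasticContraction_of_floor (fun a => Real.exp (f a) / Z) (Real.exp_pos _).le
    (Real.exp_pos _).le (fun b => ?_) (fun a => ?_) (fun a b => ?_) (fun a => ?_) ?_
  · simp_rw [add_sub_right_comm _ (g b), Real.exp_add, ← expect_mul, ← hg, ← Real.exp_add,
      neg_add_cancel, Real.exp_zero]
  · simp_rw [add_sub_assoc, Real.exp_add, ← mul_expect, ← hf, ← Real.exp_add, add_neg_cancel,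
      Real.exp_zero]
  · rw [show f a + g b - c a b = (f a - c a b) - -g b by ring, Real.exp_sub]
    calc Real.exp (-(2 * M)) * (Real.exp (f a) / Z) = Real.exp (f a - M) / (Real.exp M * Z) := by
          rw [Real.exp_sub, show -(2 * M) = -M + -M by ring, Real.exp_add, Real.exp_neg]
          field_simp
      _ ≤ Real.exp (f a - c a b) / Real.exp (-g b) :=
          div_le_div₀ (Real.exp_pos _).le (Real.exp_le_exp.2 (by linarith [hc' a b]))
            (Real.exp_pos _) (hgZ b)
  · rw [le_div_iff₀ hZ]
    calc Real.exp (-(2 * M)) * Z ≤ Real.exp (-(2 * M)) * Real.exp (f a + 2 * M) :=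
          mul_le_mul_of_nonneg_left
            (expect_le hs fun i _ => Real.exp_le_exp.2 (hosc a (x i))) (Real.exp_pos _).le
      _ = Real.exp (f a) := by rw [← Real.exp_add]; ring_nf
  · rw [← expect_div, div_self hZ.ne']

theorem isBistochasticContraction_flip_of_schrodinger {c : α → β → ℝ} {M : ℝ}
    (hc : ∀ a b, |c a b| ≤ M) (ht : t.Nonempty) {f : α → ℝ} {g : β → ℝ}
    (hf : ∀ a, Real.exp (-f a) = 𝔼 j ∈ t, Real.exp (g (y j) - c a (y j)))
    (hg : ∀ b, Real.exp (-g b) = 𝔼 i ∈ s, Real.exp (f (x i) - c (x i) b)) :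
    IsBistochasticContraction t s y x (flip fun a b => Real.exp (f a + g b - c a b))
      (doeblinRate M) := by
  convert isBistochasticContraction_of_schrodinger (c := flip c) (fun b a => hc a b) ht hg hf
    using 1
  ext b a
  rw [flip, flip, add_comm (f a)]

section Empirical

variable {Ω Θ : Type*} [MeasurableSpace Ω] [MeasurableSingletonClass Ω]

theorem integral_empMeas (X : ℕ → Θ → Ω) (n : ℕ) (θ : Θ) (h : Ω → ℝ) :
    ∫ a, h a ∂(empMeas X n θ) = 𝔼 i ∈ range n, h (X i θ) := by
  rw [empMeas, integral_smul_measure, integral_finsetSum_measure fun i _ =>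
    (integrable_const (h (X i θ))).congr (ae_eq_dirac h).symm]
  simp [integral_dirac, expect_eq_sum_div_card, ENNReal.toReal_inv, div_eq_inv_mul]

theorem opAP_empMeas (X : ℕ → Θ → Ω) (n : ℕ) (θ : Θ) (ξ : Ω × Ω → ℝ) (h : Ω → ℝ) :
    opAP (empMeas X n θ) ξ h = kernelOp (range n) (X · θ) (Function.curry ξ) h :=
  funext fun _ => integral_empMeas X n θ _

theorem opAQ_empMeas (Y : ℕ → Θ → Ω) (m : ℕ) (θ : Θ) (ξ : Ω × Ω → ℝ) (g : Ω → ℝ) :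
    opAQ (empMeas Y m θ) ξ g = kernelOp (range m) (Y · θ) (flip (Function.curry ξ)) g :=
  funext fun _ => integral_empMeas Y m θ _

theorem l2norm_empMeas (X : ℕ → Θ → Ω) (n : ℕ) (θ : Θ) (h : Ω → ℝ) :
    l2norm (empMeas X n θ) h = empNorm (range n) (X · θ) h := by
  rw [l2norm, integral_empMeas, empNorm]

theorem SchrodingerSystem.exp_neg_empMeas {c : Ω × Ω → ℝ} {X Y : ℕ → Θ → Ω} {n m : ℕ} {θ : Θ}
    {f g : Ω → ℝ} (h : SchrodingerSystem c (empMeas X n θ) (empMeas Y m θ) f g) (hn : 0 < n)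
    (hm : 0 < m) :
    (∀ a, Real.exp (-f a) = 𝔼 j ∈ range m, Real.exp (g (Y j θ) - c (a, Y j θ))) ∧
      ∀ b, Real.exp (-g b) = 𝔼 i ∈ range n, Real.exp (f (X i θ) - c (X i θ, b)) := by
  refine ⟨fun a => ?_, fun b => ?_⟩
  · rw [h.1 a, neg_neg, integral_empMeas, Real.exp_log
      (expect_pos (fun _ _ => Real.exp_pos _) (nonempty_range_iff.2 hm.ne'))]
  · rw [h.2 b, neg_neg, integral_empMeas, Real.exp_log
      (expect_pos (fun _ _ => Real.exp_pos _) (nonempty_range_iff.2 hn.ne'))]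

end Empirical

end EOT

theorem eot_neumann_truncation_general
    {Ω : Type*} [MeasurableSpace Ω] [TopologicalSpace Ω] [PolishSpace Ω]
    [BorelSpace Ω]
    (c : Ω × Ω → ℝ) (M : ℝ) (hc_bdd : ∀ p, |c p| ≤ M)
    {Θ : Type*}
    (X Y : ℕ → Θ → Ω)
    (n m : ℕ → ℕ) (hn_pos : ∀ k, 0 < n k) (hm_pos : ∀ k, 0 < m k)
    -- empirical dual potentials, extended everywhere via the Schrödinger equations
    (fE gE : ℕ → Θ → Ω → ℝ)
    (hE : ∀ k θ, EOT.SchrodingerSystem c (EOT.empMeas X (n k) θ) (EOT.empMeas Y (m k) θ)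
      (fE k θ) (gE k θ)) :
    ∀ (k : ℕ) (θ : Θ) (N : ℕ) (κ : ℝ) (Pn Qm : Measure Ω) (ξnm : Ω × Ω → ℝ),
      Pn = EOT.empMeas X (n k) θ → Qm = EOT.empMeas Y (m k) θ →
      ξnm = EOT.eotDensity c (fE k θ) (gE k θ) →
      -- first bound, on `L²(Pₙ)`
      ((∀ f : Ω → ℝ, ∫ x, f x ∂Pn = 0 → EOT.l2norm Pn f ≤ 1 →
        ∀ u : Ω → ℝ,
          (∀ x, u x - EOT.opAQ Qm ξnm
              (fun y => EOT.opAP Pn ξnm u y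
                - ∫ y', EOT.opAP Pn ξnm u y' ∂Qm) x
            = f x + κ) →
          EOT.l2norm Pn
            (fun x =>
              (∑ j ∈ Finset.range (N + 1),
                ((fun h => EOT.opAQ Qm ξnm (EOT.opAP Pn ξnm h))^[j]
                  (fun x' => f x' + κ)) x)
              - u x)
          ≤ (1 - Real.exp (-(3 * ⨆ p : Ω × Ω, |c p|))) ^ (N + 1) /
              (1 - (1 - Real.exp (-(3 * ⨆ p : Ω × Ω, |c p|))))
            + (N : ℝ) * |κ|)
      ∧
      -- second bound, on `L²(Qₘ)`
      (∀ g : Ω → ℝ, ∫ y, g y ∂Qm = 0 → EOT.l2norm Qm g ≤ 1 →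
        ∀ v : Ω → ℝ,
          (∀ y, v y - (EOT.opAP Pn ξnm (EOT.opAQ Qm ξnm v) y
              - ∫ y', EOT.opAP Pn ξnm (EOT.opAQ Qm ξnm v) y' ∂Qm)
            = g y) →
          EOT.l2norm Qm
            (fun y =>
              (∑ j ∈ Finset.range (N + 1),
                ((fun h => EOT.opAP Pn ξnm (EOT.opAQ Qm ξnm h))^[j]
                  (fun y' => g y' + κ)) y)
              - v y)
          ≤ (1 - Real.exp (-(3 * ⨆ p : Ω × Ω, |c p|))) ^ (N + 1) /
              (1 - (1 - Real.exp (-(3 * ⨆ p : Ω × Ω, |c p|))))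
            + ((N : ℝ) + 1) * |κ|)) := by
  intro k θ N κ Pn Qm ξnm hPn hQm hξ
  subst hPn hQm hξ
  set C := ⨆ p : Ω × Ω, |c p|
  have hC : ∀ a b, |c (a, b)| ≤ C := fun a b => le_ciSup ⟨M, Set.forall_mem_range.2 hc_bdd⟩ _
  have hC₀ : 0 ≤ C := (abs_nonneg _).trans (hC (X 0 θ) (X 0 θ))
  have hs := Finset.nonempty_range_iff.2 (hn_pos k).ne'
  have ht := Finset.nonempty_range_iff.2 (hm_pos k).ne'
  obtain ⟨hf, hg⟩ := (hE k θ).exp_neg_empMeas (hn_pos k) (hm_pos k)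
  have hP := EOT.isBistochasticContraction_of_schrodinger hC hs hf hg
  have hQ := EOT.isBistochasticContraction_flip_of_schrodinger hC ht hf hg
  have hrate₀ := EOT.doeblinRate_nonneg hC₀
  have hrate₁ := EOT.doeblinRate_lt_one C
  simp only [EOT.opAP_empMeas, EOT.opAQ_empMeas, EOT.l2norm_empMeas, EOT.integral_empMeas]
  refine ⟨fun f hf₀ hf₁ u hu => ?_, fun g hg₀ hg₁ v hv => ?_⟩
  · exact (hP.empNorm_neumann_sub_le_fst hs hrate₀ hrate₁ hf₀ hf₁ hu N).trans
      (add_le_add_left (EOT.neumann_tail_le hC₀ N) _)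
  · exact (hQ.empNorm_neumann_sub_le_snd ht hrate₀ hrate₁ hg₀ hg₁ hv κ N).trans
      (add_le_add_left (EOT.neumann_tail_le hC₀ N) _)

/-- **Truncated Neumann series approximation of the inverted empirical operators**
(Lemma 5.2): deterministically, for all sample sizes, truncation levels `N` and
shifts `κ`, with `δ(c) = 1 − exp(−3‖c‖_∞)`,
`‖Σ_{k=0}^N (A_{Qₘ}A_{Pₙ})^k (f + κ·1) − (I − A_{Qₘ}Ā_{Pₙ})⁻¹(f + κ·1)‖_{L²(Pₙ)}
   ≤ δ(c)^{N+1}/(1−δ(c)) + N|κ|` for `f ∈ L²₀(Pₙ)` with `‖f‖ ≤ 1`, and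
`‖Σ_{k=0}^N (A_{Pₙ}A_{Qₘ})^k (g + κ·1) − (I − Ā_{Pₙ}A_{Qₘ})⁻¹(g)‖_{L²(Qₘ)}
   ≤ δ(c)^{N+1}/(1−δ(c)) + (N+1)|κ|` for `g ∈ L²₀(Qₘ)` with `‖g‖ ≤ 1`. -/
theorem eot_neumann_truncation
    {Ω : Type*} [Nonempty Ω] [MeasurableSpace Ω] [TopologicalSpace Ω] [PolishSpace Ω]
    [BorelSpace Ω]
    (c : Ω × Ω → ℝ) (hc_meas : Measurable c) (M : ℝ) (hc_bdd : ∀ p, |c p| ≤ M)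
    (P Q : Measure Ω) [IsProbabilityMeasure P] [IsProbabilityMeasure Q]
    {Θ : Type*} [MeasurableSpace Θ] (Pr : Measure Θ) [IsProbabilityMeasure Pr]
    (X Y : ℕ → Θ → Ω)
    (hXmeas : ∀ i, Measurable (X i)) (hYmeas : ∀ j, Measurable (Y j))
    (hXlaw : ∀ i, Measure.map (X i) Pr = P) (hYlaw : ∀ j, Measure.map (Y j) Pr = Q)
    (hindep : iIndepFun (Sum.elim X Y) Pr)
    (n m : ℕ → ℕ) (hn_pos : ∀ k, 0 < n k) (hm_pos : ∀ k, 0 < m k)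
    -- empirical dual potentials, extended everywhere via the Schrödinger equations
    (fE gE : ℕ → Θ → Ω → ℝ)
    (hE : ∀ k θ, EOT.SchrodingerSystem c (EOT.empMeas X (n k) θ) (EOT.empMeas Y (m k) θ)
      (fE k θ) (gE k θ))
    (hE0 : ∀ k θ, ∫ y, gE k θ y ∂(EOT.empMeas Y (m k) θ) = 0) :
    ∀ (k : ℕ) (θ : Θ) (N : ℕ) (κ : ℝ) (Pn Qm : Measure Ω) (ξnm : Ω × Ω → ℝ),
      Pn = EOT.empMeas X (n k) θ → Qm = EOT.empMeas Y (m k) θ →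
      ξnm = EOT.eotDensity c (fE k θ) (gE k θ) →
      -- first bound, on `L²(Pₙ)`
      ((∀ f : Ω → ℝ, ∫ x, f x ∂Pn = 0 → EOT.l2norm Pn f ≤ 1 →
        ∀ u : Ω → ℝ,
          (∀ x, u x - EOT.opAQ Qm ξnm
              (fun y => EOT.opAP Pn ξnm u y
                - ∫ y', EOT.opAP Pn ξnm u y' ∂Qm) x
            = f x + κ) →
          EOT.l2norm Pn
            (fun x =>
              (∑ j ∈ Finset.range (N + 1),
                ((fun h => EOT.opAQ Qm ξnm (EOT.opAP Pn ξnm h))^[j]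
                  (fun x' => f x' + κ)) x)
              - u x)
          ≤ (1 - Real.exp (-(3 * ⨆ p : Ω × Ω, |c p|))) ^ (N + 1) /
              (1 - (1 - Real.exp (-(3 * ⨆ p : Ω × Ω, |c p|))))
            + (N : ℝ) * |κ|)
      ∧
      -- second bound, on `L²(Qₘ)`
      (∀ g : Ω → ℝ, ∫ y, g y ∂Qm = 0 → EOT.l2norm Qm g ≤ 1 →
        ∀ v : Ω → ℝ,
          (∀ y, v y - (EOT.opAP Pn ξnm (EOT.opAQ Qm ξnm v) y
              - ∫ y', EOT.opAP Pn ξnm (EOT.opAQ Qm ξnm v) y' ∂Qm)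
            = g y) →
          EOT.l2norm Qm
            (fun y =>
              (∑ j ∈ Finset.range (N + 1),
                ((fun h => EOT.opAP Pn ξnm (EOT.opAQ Qm ξnm h))^[j]
                  (fun y' => g y' + κ)) y)
              - v y)
          ≤ (1 - Real.exp (-(3 * ⨆ p : Ω × Ω, |c p|))) ^ (N + 1) /
              (1 - (1 - Real.exp (-(3 * ⨆ p : Ω × Ω, |c p|))))
            + ((N : ℝ) + 1) * |κ|)) :=
  eot_neumann_truncation_general c M hc_bdd X Y n m hn_pos hm_pos fE gE hE
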